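/- arXiv:1603.08579 — 9 statements merged into one kernel-verified Lean document; each statement's English description precedes it below -/
import Mathlib

section
/- Let P be a team property that is downward closed and satisfies P ∅, and suppose that the weak classical negation of P, namely Q X := (X = ∅ ∨ ¬ P X), is also downward closed. Then: (1) P is upward closed on nonempty teams, i.e. if P X holds, X ≠ ∅ and X ⊆ Y, then P Y holds; and consequently (2) P is flat, i.e. for every team X, P X holds if and only if P {s} holds for every s ∈ X. -/
/-- If a team property `P` over `(ι, M)` is downward closed, holds of the
empty team, and its weak classical negation `Q X := (X = ∅ ∨ ¬ P X)` is also downward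
closed, then `P` is upward closed on nonempty teams and flat. -/
theorem weak_negation_downward_closed_implies_flat
    {ι M : Type*} [Nonempty M] (P : Set (ι → M) → Prop)
    (hPdc : ∀ X Y : Set (ι → M), P X → Y ⊆ X → P Y)
    (hPempty : P (∅ : Set (ι → M)))
    (hQdc : ∀ X Y : Set (ι → M), (X = ∅ ∨ ¬ P X) → Y ⊆ X → (Y = ∅ ∨ ¬ P Y)) :
    (∀ X Y : Set (ι → M), P X → X ≠ ∅ → X ⊆ Y → P Y) ∧
      (∀ X : Set (ι → M), P X ↔ ∀ s ∈ X, P {s}) := by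
  have hup : ∀ X Y : Set (ι → M), P X → X ≠ ∅ → X ⊆ Y → P Y := by
    intro X Y hPX hXne hXY
    by_contra hPY
    rcases hQdc Y X (Or.inr hPY) hXY with h | h
    · exact hXne h
    · exact h hPX
  refine ⟨hup, fun X => ⟨fun hPX s hs => hPdc X {s} hPX (by simpa using hs), ?_⟩⟩
  intro h
  rcases eq_or_ne X ∅ with rfl | hne
  · exact hPempty
  · obtain ⟨s, hs⟩ := Set.nonempty_iff_ne_empty.mpr hne
    exact hup {s} X (h s hs) (Set.singleton_nonempty s).ne_empty (by simpa using hs)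
end

section
/- Let L be a first-order language, M a nonempty L-structure, φ : L.Formula (Fin n) a first-order formula, ι a type of variables, x : Fin n → ι a tuple of variables, and X ⊆ (ι → M) a team. Then the following are equivalent: (A) X = ∅, or there exists s ∈ X with ¬ φ.Realize (s ∘ x); (B) there exists a team Y ⊆ ((ι ⊕ Fin n) → M) such that (i) for every t ∈ Y, the restriction t ∘ Sum.inl belongs to X, and every s ∈ X equals t ∘ Sum.inl for some t ∈ Y; (ii) Y satisfies the inclusion atom w ⊆ x for the fresh variables w = Sum.inr: for every t ∈ Y there exists t' ∈ Y with t' (Sum.inl (x j)) = t (Sum.inr j) for all j : Fin n; and (iii) for every t ∈ Y, ¬ φ.Realize (t ∘ Sum.inr). (This expresses that the weak classical negation of a first-order formula φ(x⃗) is equivalent to ∃w⃗ (w⃗ ⊆ x⃗ ∧ ¬φ(w⃗)) under lax team semantics.) -/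
open FirstOrder

/-- the weak classical negation of a first-order formula `φ(x⃗)` is
equivalent, under lax team semantics, to `∃w⃗ (w⃗ ⊆ x⃗ ∧ ¬φ(w⃗))`. -/
theorem weak_negation_of_firstOrder_formula
    {L : FirstOrder.Language} {M : Type*} [Nonempty M] [L.Structure M]
    {n : ℕ} (φ : L.Formula (Fin n)) {ι : Type*} (x : Fin n → ι)
    (X : Set (ι → M)) :
    (X = ∅ ∨ ∃ s ∈ X, ¬ φ.Realize (s ∘ x)) ↔
      ∃ Y : Set ((ι ⊕ Fin n) → M),
        ((∀ t ∈ Y, (t ∘ Sum.inl) ∈ X) ∧ (∀ s ∈ X, ∃ t ∈ Y, t ∘ Sum.inl = s)) ∧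
        (∀ t ∈ Y, ∃ t' ∈ Y, ∀ j : Fin n, t' (Sum.inl (x j)) = t (Sum.inr j)) ∧
        (∀ t ∈ Y, ¬ φ.Realize (t ∘ Sum.inr)) := by
  constructor
  · rintro (rfl | ⟨s₀, hs₀, hφ⟩)
    · exact ⟨∅, ⟨fun t ht => ht.elim, fun s hs => hs.elim⟩,
        fun t ht => ht.elim, fun t ht => ht.elim⟩
    · refine ⟨{t | (t ∘ Sum.inl) ∈ X ∧ t ∘ Sum.inr = s₀ ∘ x}, ⟨fun t ht => ht.1, ?_⟩, ?_, ?_⟩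
      · intro s hs
        exact ⟨Sum.elim s (s₀ ∘ x), ⟨hs, rfl⟩, rfl⟩
      · intro t ht
        refine ⟨Sum.elim s₀ (s₀ ∘ x), ⟨hs₀, rfl⟩, fun j => ?_⟩
        simpa using (congrFun ht.2 j).symm
      · intro t ht
        rw [ht.2]; exact hφ
  · rintro ⟨Y, ⟨hYX, hXY⟩, hincl, hneg⟩
    rcases Set.eq_empty_or_nonempty X with h | ⟨s, hs⟩
    · exact Or.inl h
    · obtain ⟨t, ht, rfl⟩ := hXY s hs
      obtain ⟨t', ht', hj⟩ := hincl t ht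
      refine Or.inr ⟨t' ∘ Sum.inl, hYX t' ht', ?_⟩
      have : (t' ∘ Sum.inl) ∘ x = t ∘ Sum.inr := funext fun j => hj j
      rw [this]
      exact hneg t ht
end

section
/- Let X ⊆ (ι → M) be a team, x : Fin m → ι a tuple of variables, and k ∈ ℕ. Define the duplicating team Y ⊆ ((ι ⊕ (Fin k × Fin m)) → M) by: t ∈ Y iff there exist s ∈ X and σ : Fin k → (ι → M) with σ i ∈ X for all i, such that t (Sum.inl v) = s v for all v : ι and t (Sum.inr (i, j)) = σ i (x j) for all i, j. Then for any disjoint sets A, B ⊆ Fin k and any tuple v : Fin c → ι, Y satisfies the independence atom w_A ⊥ (w_B, v): for all t, t' ∈ Y there exists t'' ∈ Y such that t'' (Sum.inr (i, j)) = t (Sum.inr (i, j)) for all i ∈ A and all j; t'' (Sum.inr (i, j)) = t' (Sum.inr (i, j)) for all i ∈ B and all j; and t'' (Sum.inl (v l)) = t' (Sum.inl (v l)) for all l. -/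
/-- the duplicating team satisfies the independence atom
`w_A ⊥ (w_B, v)` for disjoint `A, B ⊆ Fin k` and any tuple `v` of old variables. -/
theorem duplicating_team_satisfies_independence
    {ι M : Type*} [Nonempty M] (X : Set (ι → M)) {m : ℕ} (x : Fin m → ι) (k : ℕ)
    (Y : Set ((ι ⊕ (Fin k × Fin m)) → M))
    (hY : ∀ t, t ∈ Y ↔ ∃ s ∈ X, ∃ σ : Fin k → (ι → M), (∀ i, σ i ∈ X) ∧
        (∀ v : ι, t (Sum.inl v) = s v) ∧ (∀ i j, t (Sum.inr (i, j)) = σ i (x j)))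
    (A B : Set (Fin k)) (hAB : Disjoint A B) {c : ℕ} (v : Fin c → ι) :
    ∀ t ∈ Y, ∀ t' ∈ Y, ∃ t'' ∈ Y,
      (∀ i ∈ A, ∀ j, t'' (Sum.inr (i, j)) = t (Sum.inr (i, j))) ∧
      (∀ i ∈ B, ∀ j, t'' (Sum.inr (i, j)) = t' (Sum.inr (i, j))) ∧
      (∀ l, t'' (Sum.inl (v l)) = t' (Sum.inl (v l))) := by
  intro t ht t' ht'
  obtain ⟨s, hs, σ, hσ, hl, hr⟩ := (hY t).1 ht
  obtain ⟨s', hs', σ', hσ', hl', hr'⟩ := (hY t').1 ht'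
  classical
  set τ : Fin k → (ι → M) := fun i => if i ∈ A then σ i else σ' i with hτ
  refine ⟨fun p => Sum.elim s' (fun q => τ q.1 (x q.2)) p, ?_, ?_, ?_, ?_⟩
  · exact (hY _).2 ⟨s', hs', τ, fun i => by by_cases h : i ∈ A <;> simp [hτ, h, hσ i, hσ' i],
      fun _ => rfl, fun i j => rfl⟩
  · intro i hi j; simp [hτ, hi, hr]
  · intro i hi j
    have : i ∉ A := fun h => hAB.le_bot ⟨h, hi⟩
    simp [hτ, this, hr']
  · intro l; simp [hl']
end

section
/- Let X ⊆ (ι → M) be a team, x : Fin m → ι a tuple of variables, and k ∈ ℕ. Define the duplicating team Y ⊆ ((ι ⊕ (Fin k × Fin m)) → M) by: t ∈ Y iff there exist s ∈ X and σ : Fin k → (ι → M) with σ i ∈ X for all i, such that t (Sum.inl v) = s v for all v : ι and t (Sum.inr (i, j)) = σ i (x j) for all i, j. Then: (1) for each i : Fin k, Y satisfies the inclusion atom x ⊆ wᵢ, i.e. for every t ∈ Y there exists t' ∈ Y with t' (Sum.inr (i, j)) = t (Sum.inl (x j)) for all j : Fin m; (2) for every t ∈ Y and every i : Fin k, there exists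 s ∈ X with s (x j) = t (Sum.inr (i, j)) for all j; and (3) the restriction map t ↦ t ∘ Sum.inl maps Y into X and, if X is nonempty, onto X. -/
/-- basic properties of the duplicating team: it satisfies each
inclusion atom `x ⊆ wᵢ`, each block of fresh values comes from an assignment in `X`,
and the restriction map sends `Y` into `X` and (if `X` is nonempty) onto `X`. -/
theorem duplicating_team_properties
    {ι M : Type*} [Nonempty M] (X : Set (ι → M)) {m : ℕ} (x : Fin m → ι) (k : ℕ)
    (Y : Set ((ι ⊕ (Fin k × Fin m)) → M))
    (hY : ∀ t, t ∈ Y ↔ ∃ s ∈ X, ∃ σ : Fin k → (ι → M), (∀ i, σ i ∈ X) ∧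
        (∀ v : ι, t (Sum.inl v) = s v) ∧ (∀ i j, t (Sum.inr (i, j)) = σ i (x j))) :
    (∀ i : Fin k, ∀ t ∈ Y, ∃ t' ∈ Y, ∀ j : Fin m,
        t' (Sum.inr (i, j)) = t (Sum.inl (x j))) ∧
    (∀ t ∈ Y, ∀ i : Fin k, ∃ s ∈ X, ∀ j : Fin m, s (x j) = t (Sum.inr (i, j))) ∧
    ((∀ t ∈ Y, (t ∘ Sum.inl) ∈ X) ∧
      (X.Nonempty → ∀ s ∈ X, ∃ t ∈ Y, t ∘ Sum.inl = s)) := by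
  refine ⟨?_, ?_, ?_, ?_⟩
  · intro i t ht
    obtain ⟨s, hs, σ, hσ, h1, h2⟩ := (hY t).1 ht
    refine ⟨Sum.elim s (fun p => Function.update σ i s p.1 (x p.2)), ?_, ?_⟩
    · exact (hY _).2 ⟨s, hs, Function.update σ i s, fun i' => by
        by_cases h : i' = i
        · subst h; simp [hs]
        · simp [Function.update_of_ne h, hσ],
        fun v => rfl, fun i' j => rfl⟩
    · intro j; simp [h1]
  · intro t ht i
    obtain ⟨s, hs, σ, hσ, h1, h2⟩ := (hY t).1 ht
    exact ⟨σ i, hσ i, fun j => (h2 i j).symm⟩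
  · intro t ht
    obtain ⟨s, hs, σ, hσ, h1, h2⟩ := (hY t).1 ht
    have : t ∘ Sum.inl = s := funext fun v => h1 v
    rw [this]; exact hs
  · intro _ s hs
    exact ⟨Sum.elim s (fun p => s (x p.2)), (hY _).2
      ⟨s, hs, fun _ => s, fun _ => hs, fun v => rfl, fun i j => rfl⟩, rfl⟩
end

section
/- Let X ⊆ (ι → M) be a team and x : α → ι, y : β → ι, z : γ → ι tuples of variables. If X satisfies the independence atom x ⊥ y and X satisfies the independence atom (Sum.elim x y) ⊥ z, then X satisfies the independence atom x ⊥ (Sum.elim y z) (the fourth Geiger–Paz–Pearl axiom, semantically). -/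
/-- The team `X` satisfies the independence atom `x ⊥ y`. -/
def IndAtom {ι M α β : Type*} (X : Set (ι → M)) (x : α → ι) (y : β → ι) : Prop :=
  ∀ s ∈ X, ∀ s' ∈ X, ∃ s'' ∈ X, s'' ∘ x = s ∘ x ∧ s'' ∘ y = s' ∘ y

/-- the fourth Geiger–Paz–Pearl axiom, semantically:
`x ⊥ y` and `xy ⊥ z` entail `x ⊥ yz`. -/
theorem independence_exchange
    {ι M : Type*} [Nonempty M] {α β γ : Type*}
    (X : Set (ι → M)) (x : α → ι) (y : β → ι) (z : γ → ι)
    (h1 : IndAtom X x y) (h2 : IndAtom X (Sum.elim x y) z) :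
    IndAtom X x (Sum.elim y z) := by
  intro s hs s' hs'
  obtain ⟨t, ht, htx, hty⟩ := h1 s hs s' hs'
  obtain ⟨u, hu, huxy, huz⟩ := h2 t ht s' hs'
  refine ⟨u, hu, ?_, ?_⟩
  · have : u ∘ x = t ∘ x := funext fun a => congrFun huxy (Sum.inl a)
    rw [this, htx]
  · funext b
    cases b with
    | inl b => exact (congrFun huxy (Sum.inr b)).trans (congrFun hty b)
    | inr c => exact congrFun huz c
end

section
/- Let X ⊆ (ι → M) be a team and x, y, z tuples of variables. Armstrong's axioms hold semantically for dependence atoms: (1) X satisfies =(x, x); (2) if X satisfies =(Sum.elim x y, z) then X satisfies =(Sum.elim y x, z); (3) if X satisfies =(Sum.elim x x, y) then X satisfies =(x, y); (4) if X satisfies =(y, z) then X satisfies =(Sum.elim x y, z); (5) if X satisfies =(x, y) and =(y, z) then X satisfies =(x, z). -/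
/-- The team `X` satisfies the dependence atom `=(x, y)`. -/
def DepAtom {ι M α β : Type*} (X : Set (ι → M)) (x : α → ι) (y : β → ι) : Prop :=
  ∀ s ∈ X, ∀ s' ∈ X, s ∘ x = s' ∘ x → s ∘ y = s' ∘ y

/-- Armstrong's axioms hold semantically for dependence atoms. -/
theorem armstrong_axioms
    {ι M : Type*} [Nonempty M] {α β γ : Type*}
    (X : Set (ι → M)) (x : α → ι) (y : β → ι) (z : γ → ι) :
    DepAtom X x x ∧
    (DepAtom X (Sum.elim x y) z → DepAtom X (Sum.elim y x) z) ∧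
    (DepAtom X (Sum.elim x x) y → DepAtom X x y) ∧
    (DepAtom X y z → DepAtom X (Sum.elim x y) z) ∧
    (DepAtom X x y → DepAtom X y z → DepAtom X x z) := by
  refine ⟨fun s _ s' _ h => h, ?_, ?_, ?_, ?_⟩
  · intro h s hs s' hs' he
    apply h s hs s' hs'
    funext a
    cases a with
    | inl a => exact congrFun he (Sum.inr a)
    | inr a => exact congrFun he (Sum.inl a)
  · intro h s hs s' hs' he
    apply h s hs s' hs'
    funext a
    cases a with
    | inl a => exact congrFun he a
    | inr a => exact congrFun he a
  · intro h s hs s' hs' he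
    apply h s hs s' hs'
    funext b
    exact congrFun he (Sum.inr b)
  · intro h1 h2 s hs s' hs' he
    exact h2 s hs s' hs' (h1 s hs s' hs' he)
end

section
/- Let X ⊆ (ι → M) be a team, and let w, s₁, s₂ : α → ι and u, t₁, t₂ : β → ι be tuples of variables. Suppose X satisfies the dependence atom =(w, u), and X satisfies the inclusion atoms (Sum.elim s₁ t₁) ⊆ (Sum.elim w u) and (Sum.elim s₂ t₂) ⊆ (Sum.elim w u). Then for every assignment s ∈ X, if s ∘ s₁ = s ∘ s₂ then s ∘ t₁ = s ∘ t₂. -/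
/-- The team `X` satisfies the inclusion atom `x ⊆ y`. -/
def IncAtom {ι M α : Type*} (X : Set (ι → M)) (x y : α → ι) : Prop :=
  ∀ s ∈ X, ∃ s' ∈ X, s' ∘ y = s ∘ x

/-- if `X ⊨ =(w, u)`, `X ⊨ s₁t₁ ⊆ wu` and `X ⊨ s₂t₂ ⊆ wu`, then every
assignment in `X` satisfies `s₁ = s₂ → t₁ = t₂`. -/
theorem dependence_via_inclusion
    {ι M : Type*} [Nonempty M] {α β : Type*}
    (X : Set (ι → M)) (w s₁ s₂ : α → ι) (u t₁ t₂ : β → ι)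
    (hdep : DepAtom X w u)
    (h1 : IncAtom X (Sum.elim s₁ t₁) (Sum.elim w u))
    (h2 : IncAtom X (Sum.elim s₂ t₂) (Sum.elim w u)) :
    ∀ s ∈ X, s ∘ s₁ = s ∘ s₂ → s ∘ t₁ = s ∘ t₂ := by
  intro s hs hss
  obtain ⟨p, hp, hpe⟩ := h1 s hs
  obtain ⟨q, hq, hqe⟩ := h2 s hs
  have hpw : p ∘ w = s ∘ s₁ := funext fun a => congrFun hpe (Sum.inl a)
  have hpu : p ∘ u = s ∘ t₁ := funext fun b => congrFun hpe (Sum.inr b)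
  have hqw : q ∘ w = s ∘ s₂ := funext fun a => congrFun hqe (Sum.inl a)
  have hqu : q ∘ u = s ∘ t₂ := funext fun b => congrFun hqe (Sum.inr b)
  have := hdep p hp q hq (by rw [hpw, hqw, hss])
  rw [← hpu, ← hqu, this]
end

section
/- Let L be a first-order language, M a nonempty L-structure, φ : L.Formula α a first-order formula, ι a type of variables, x, y : α → ι tuples of variables, and X ⊆ (ι → M) a team. If X satisfies the inclusion atom y ⊆ x (for every s ∈ X there exists s' ∈ X with s' ∘ x = s ∘ y), and φ.Realize (s ∘ x) holds for every s ∈ X, then φ.Realize (s ∘ y) holds for every s ∈ X (soundness of the inclusion compression rule for first-order formulas). -/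
open FirstOrder

/-- soundness of the inclusion compression rule for first-order
formulas: if `X ⊨ y ⊆ x` and `φ(x)` holds at every assignment of `X`, then `φ(y)`
holds at every assignment of `X`. -/
theorem inclusion_compression_sound
    {L : FirstOrder.Language} {M : Type*} [Nonempty M] [L.Structure M]
    {α ι : Type*} (φ : L.Formula α) (x y : α → ι) (X : Set (ι → M))
    (hinc : ∀ s ∈ X, ∃ s' ∈ X, s' ∘ x = s ∘ y)
    (hφ : ∀ s ∈ X, φ.Realize (s ∘ x)) :
    ∀ s ∈ X, φ.Realize (s ∘ y) := by
  intro s hs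
  obtain ⟨s', hs', h⟩ := hinc s hs
  rw [← h]
  exact hφ s' hs'
end

section
/- Let P be a flat team property over (ι, M) and x : ι a variable. For a supplementing function F : (ι → M) → Set M, define X[F/x] := { Function.update s x a | s ∈ X, a ∈ F s }. Then the team property R given by the lax team-semantic clause for the existential quantifier, R X := ∃ F : (ι → M) → Set M, (∀ s ∈ X, (F s).Nonempty) ∧ P (X[F/x]), is flat. -/
/-- A team property is flat iff it holds of a team exactly when it holds of every
singleton subteam. -/
def Flat {ι M : Type*} (P : Set (ι → M) → Prop) : Prop :=
  ∀ X : Set (ι → M), P X ↔ ∀ s ∈ X, P {s}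

/-- the lax team-semantic existential quantification of a flat team
property is flat. -/
theorem flat_lax_existential
    {ι M : Type*} [DecidableEq ι] [Nonempty M]
    (P : Set (ι → M) → Prop) (hP : Flat P) (x : ι) :
    Flat (fun X => ∃ F : (ι → M) → Set M, (∀ s ∈ X, (F s).Nonempty) ∧
      P {t | ∃ s ∈ X, ∃ a ∈ F s, t = Function.update s x a}) := by
  intro X
  constructor
  · rintro ⟨F, hF, hPF⟩ s hs
    refine ⟨F, fun t ht => hF t (by simpa using ht ▸ hs), ?_⟩
    rw [hP]
    intro u hu
    obtain ⟨t, ht, a, ha, rfl⟩ := hu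
    have := (hP _).mp hPF
    exact this _ ⟨t, by simpa using ht ▸ hs, a, ha, rfl⟩
  · intro h
    classical
    choose F hF1 hF2 using fun s (hs : s ∈ X) => h s hs
    refine ⟨fun s => if hs : s ∈ X then F s hs s else Set.univ, ?_, ?_⟩
    · intro s hs
      simp only [dif_pos hs]
      exact hF1 s hs s rfl
    · rw [hP]
      rintro u ⟨s, hs, a, ha, rfl⟩
      simp only [dif_pos hs] at ha
      have := (hP _).mp (hF2 s hs)
      exact this _ ⟨s, rfl, a, ha, rfl⟩
end
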